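/- arXiv:2602.17317 — 7 statements merged into one kernel-verified Lean document; each statement's English description precedes it below -/
import Mathlib

section
/- Fix a > 0. Then, as ε → 0⁺, ∫ x in (0)..(a/ε), 1 / Real.sqrt (1 + x^2) = -Real.log ε + Real.log (2*a) + ε^2/(4*a^2) + O(ε^4); precisely, there exist C > 0 and ε₀ > 0 such that for all 0 < ε < ε₀, |(∫ x in (0)..(a/ε), 1/Real.sqrt (1+x^2)) - (-Real.log ε + Real.log (2*a) + ε^2/(4*a^2))| ≤ C * ε^4. -/
open Real intervalIntegral in
lemma integral_inv_sqrt_one_add_sq_eq (T : ℝ) :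
    (∫ x in (0:ℝ)..T, 1 / Real.sqrt (1 + x^2)) = Real.arsinh T := by
  have hderiv : ∀ x ∈ Set.uIcc (0:ℝ) T,
      HasDerivAt Real.arsinh (1 / Real.sqrt (1 + x^2)) x := fun x _ => by
    simpa [one_div] using Real.hasDerivAt_arsinh x
  have hcont : Continuous fun x : ℝ => 1 / Real.sqrt (1 + x^2) :=
    continuous_const.div (by continuity)
      (fun x => ne_of_gt (Real.sqrt_pos.2 (by positivity)))
  have := intervalIntegral.integral_eq_sub_of_hasDerivAt hderiv
    (hcont.intervalIntegrable 0 T)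
  simpa [Real.arsinh_zero] using this

set_option maxHeartbeats 1600000 in
theorem integral_inv_sqrt_one_add_sq_asymp (a : ℝ) (ha : 0 < a) :
    ∃ C > (0:ℝ), ∃ ε₀ > (0:ℝ), ∀ ε : ℝ, 0 < ε → ε < ε₀ →
      |(∫ x in (0:ℝ)..(a/ε), 1 / Real.sqrt (1 + x^2)) -
        (-Real.log ε + Real.log (2*a) + ε^2/(4*a^2))| ≤ C * ε^4 := by
  refine ⟨1/(8*a^4), by positivity, a, ha, fun ε hε hεa => ?_⟩
  set s : ℝ := Real.sqrt (a^2 + ε^2) with hs_def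
  have hs_pos : 0 < s := Real.sqrt_pos.2 (by positivity)
  have hs_sq : s^2 = a^2 + ε^2 := Real.sq_sqrt (by positivity)
  have hs_ge : a ≤ s := by
    have h : a = Real.sqrt (a^2) := (Real.sqrt_sq ha.le).symm
    rw [h]; exact Real.sqrt_le_sqrt (by nlinarith)
  clear_value s
  rw [integral_inv_sqrt_one_add_sq_eq]
  have harsinh : Real.arsinh (a/ε) = Real.log (a + s) - Real.log ε := by
    have h1 : Real.sqrt (1 + (a/ε)^2) = s / ε := by
      rw [show (1 + (a/ε)^2) = (a^2+ε^2)/ε^2 by field_simp; ring,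
        Real.sqrt_div (by positivity), Real.sqrt_sq hε.le, hs_def]
    rw [Real.arsinh, h1, show a/ε + s/ε = (a+s)/ε by ring,
      Real.log_div (by positivity) (ne_of_gt hε)]
  rw [harsinh]
  -- abbreviations
  set b : ℝ := ε^2/(2*a) with hb_def
  set c : ℝ := ε^4/(8*a^3) with hc_def
  set p : ℝ := ε^2/(4*a^2) with hp_def
  set q : ℝ := ε^4/(16*a^4) with hq_def
  have hb_pos : 0 < b := by positivity
  have hc_pos : 0 < c := by positivity
  have hp_pos : 0 < p := by positivity
  have hq_pos : 0 < q := by positivity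
  clear_value b c p q
  have hab : 2*a*b = ε^2 := by rw [hb_def]; field_simp
  have hb2 : b^2 = 2*a*c := by rw [hb_def, hc_def]; field_simp; ring
  have hqp : q = p^2 := by rw [hq_def, hp_def]; field_simp; ring
  have hpb : p = b/(2*a) := by rw [hp_def, hb_def]; field_simp; ring
  have hqc : q = c/(2*a) := by rw [hq_def, hc_def]; field_simp; ring
  have hεa2 : ε^2 ≤ a^2 := by nlinarith
  have hcb : c ≤ 2*b := by
    have key : 2*b - c = (8*a^2*ε^2 - ε^4)/(8*a^3) := by
      rw [hb_def, hc_def]; field_simp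
    have h0 : 0 ≤ (8*a^2*ε^2 - ε^4)/(8*a^3) :=
      div_nonneg (by nlinarith) (by positivity)
    linarith
  -- bounds on s
  have hba : b ≤ a := by
    rw [hb_def, div_le_iff₀ (by positivity)]; nlinarith
  have hs_upper : s ≤ a + b := by
    have expand : (a + b)^2 = a^2 + ε^2 + b^2 := by linear_combination hab
    have h1 : a^2 + ε^2 ≤ (a + b)^2 := by nlinarith [sq_nonneg b, expand]
    calc s = Real.sqrt (a^2 + ε^2) := hs_def
      _ ≤ Real.sqrt ((a + b)^2) := Real.sqrt_le_sqrt h1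
      _ = a + b := Real.sqrt_sq (by positivity)
  have hs_lower : a + b - c ≤ s := by
    have hnn : 0 ≤ a + b - c := by linarith
    have h1 : (a + b - c)^2 ≤ a^2 + ε^2 := by
      have expand : (a + b - c)^2 = a^2 + ε^2 - c*(2*b - c) := by
        linear_combination hab + hb2
      have h2 : 0 ≤ c*(2*b - c) := mul_nonneg hc_pos.le (by linarith)
      linarith
    calc a + b - c = Real.sqrt ((a + b - c)^2) := (Real.sqrt_sq hnn).symm
      _ ≤ Real.sqrt (a^2 + ε^2) := Real.sqrt_le_sqrt h1
      _ = s := hs_def.symm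
  -- u = (s-a)/(2a)
  set u : ℝ := (s - a)/(2*a) with hu_def
  have hu_nonneg : 0 ≤ u := div_nonneg (by linarith) (by positivity)
  clear_value u
  have hlog : Real.log (a + s) - Real.log (2*a) = Real.log (1 + u) := by
    rw [← Real.log_div (by positivity) (by positivity)]
    congr 1
    rw [hu_def]; field_simp; ring
  -- bounds on u
  have hu_upper : u ≤ p := by
    rw [hu_def, hpb, div_le_div_iff_of_pos_right (by positivity)]
    linarith
  have hu_lower : p - q ≤ u := by
    rw [hu_def, hpb, hqc, div_sub_div_same,
      div_le_div_iff_of_pos_right (by positivity)]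
    linarith
  have hu_sq : u^2 ≤ p^2 := pow_le_pow_left₀ hu_nonneg hu_upper 2
  -- log bounds
  have h1u : (0:ℝ) < 1 + u := by linarith
  have hlog_upper : Real.log (1 + u) ≤ u := by
    have := Real.log_le_sub_one_of_pos h1u
    linarith
  have hlog_lower : u - u^2 ≤ Real.log (1 + u) := by
    have h2 : 1 - (1+u)⁻¹ ≤ Real.log (1+u) := Real.one_sub_inv_le_log_of_pos h1u
    have h3 : u - u^2 ≤ 1 - (1+u)⁻¹ := by
      have he : 1 - (1+u)⁻¹ = u/(1+u) := by field_simp; ring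
      rw [he, le_div_iff₀ h1u]
      nlinarith
    linarith
  -- conclude
  have hkey : |Real.log (1 + u) - p| ≤ 2*q := by
    rw [abs_le]
    constructor
    · linarith
    · linarith
  have hfin : 2*q = 1/(8*a^4) * ε^4 := by rw [hq_def]; field_simp; ring
  calc |Real.log (a + s) - Real.log ε - (-Real.log ε + Real.log (2*a) + p)|
      = |Real.log (1 + u) - p| := by rw [← hlog]; ring_nf
    _ ≤ 2*q := hkey
    _ = 1/(8*a^4) * ε^4 := hfin
end

section
/- Fix a > 0. There exist C > 0 and ε₀ > 0 such that for all 0 < ε < ε₀, |(∫ x in (0)..(a/ε), x^2 / Real.sqrt (1 + x^2)) - (a^2/(2*ε^2) + (1/2)*Real.log ε + 1/4 - (1/2)*Real.log (2*a))| ≤ C * ε^2. -/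
open Real

lemma hasDerivF (x : ℝ) :
    HasDerivAt (fun t => t * Real.sqrt (1 + t^2) / 2 - Real.arsinh t / 2)
      (x^2 / Real.sqrt (1 + x^2)) x := by
  have hpos : (0:ℝ) < 1 + x^2 := by positivity
  have hs : 0 < Real.sqrt (1 + x^2) := Real.sqrt_pos.2 hpos
  have hsq : Real.sqrt (1 + x^2) ^ 2 = 1 + x^2 := Real.sq_sqrt hpos.le
  have h1 : HasDerivAt (fun t : ℝ => 1 + t^2) (2*x) x := by
    simpa using ((hasDerivAt_pow 2 x).const_add 1)
  have h2 : HasDerivAt (fun t => Real.sqrt (1 + t^2))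
      (1 / (2 * Real.sqrt (1 + x^2)) * (2*x)) x :=
    (Real.hasDerivAt_sqrt (ne_of_gt hpos)).comp x h1
  have h3 : HasDerivAt (fun t => t * Real.sqrt (1 + t^2))
      (1 * Real.sqrt (1 + x^2) + x * (1 / (2 * Real.sqrt (1 + x^2)) * (2*x))) x :=
    (hasDerivAt_id x).mul h2
  have h4 := Real.hasDerivAt_arsinh x
  have := (h3.div_const 2).sub (h4.div_const 2)
  refine this.congr_deriv ?_
  field_simp
  nlinarith [hsq, hs]

lemma key (T : ℝ) (hT : 1 ≤ T) :
    |T * Real.sqrt (1 + T^2) / 2 - Real.arsinh T / 2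
      - (T^2/2 - Real.log (2*T)/2 + 1/4)| ≤ 1 / T^2 := by
  have hT0 : 0 < T := lt_of_lt_of_le one_pos hT
  have hpos : (0:ℝ) < 1 + T^2 := by positivity
  set s := Real.sqrt (1 + T^2) with hsdef
  have hs : 0 < s := Real.sqrt_pos.2 hpos
  have hsq : s ^ 2 = 1 + T^2 := Real.sq_sqrt hpos.le
  have hsub : s ≤ T + 1/(2*T) := by
    rw [hsdef]
    rw [show (1:ℝ) + T^2 = (T + 1/(2*T))^2 - 1/(4*T^2) by field_simp; ring]
    calc Real.sqrt ((T + 1/(2*T))^2 - 1/(4*T^2)) ≤ Real.sqrt ((T + 1/(2*T))^2) := by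
          apply Real.sqrt_le_sqrt
          have : (0:ℝ) < 1/(4*T^2) := by positivity
          linarith
      _ = T + 1/(2*T) := Real.sqrt_sq (by positivity)
  have hsT : T ≤ s := by nlinarith [hsq, hs]
  -- A bounds
  have hA1 : T * s / 2 - T^2/2 - 1/4 ≤ 0 := by
    nlinarith [mul_le_mul_of_nonneg_left hsub hT0.le]
  have hTs : 8*T^4 + 4*T^2 - 1 ≤ 8*T^3*s := by
    have hL : (8*T^3*s)^2 = 64*T^6*(1+T^2) := by rw [mul_pow, hsq]; ring
    nlinarith [hL, hs.le, hT0.le, hT, mul_nonneg (by positivity : (0:ℝ) ≤ 8*T^3) hs.le,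
      sq_nonneg (T-1), sq_nonneg T]
  have hA2eq : T * s / 2 - T^2/2 - 1/4 + 1/(16*T^2)
      = (8*T^3*s - (8*T^4 + 4*T^2 - 1))/(16*T^2) := by
    field_simp; ring
  have hnn : (0:ℝ) ≤ (8*T^3*s - (8*T^4 + 4*T^2 - 1))/(16*T^2) :=
    div_nonneg (by linarith) (by positivity)
  have hA2 : -(1/(16*T^2)) ≤ T * s / 2 - T^2/2 - 1/4 := by linarith
  -- B bounds
  have harsinh : Real.arsinh T = Real.log (T + s) := rfl
  have hlogdiv : Real.arsinh T - Real.log (2*T) = Real.log ((T + s)/(2*T)) := by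
    rw [harsinh, Real.log_div (by positivity) (by positivity)]
  have hB1 : 0 ≤ Real.arsinh T - Real.log (2*T) := by
    rw [hlogdiv]
    apply Real.log_nonneg
    rw [le_div_iff₀ (by positivity)]
    linarith
  have hB2 : Real.arsinh T - Real.log (2*T) ≤ 1/(4*T^2) := by
    rw [hlogdiv]
    have h1 := Real.log_le_sub_one_of_pos (show (0:ℝ) < (T+s)/(2*T) by positivity)
    have h2 : (T + s)/(2*T) - 1 ≤ 1/(4*T^2) := by
      rw [div_sub_one (by positivity : (2*T:ℝ) ≠ 0),
        div_le_div_iff₀ (by positivity) (by positivity)]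
      nlinarith
    linarith
  have hu : (0:ℝ) ≤ 1/T^2 := by positivity
  have e1 : 1/(16*T^2) = (1/T^2)/16 := by field_simp
  have e3 : 1/(4*T^2) = (1/T^2)/4 := by field_simp
  rw [abs_le]
  constructor
  · linarith
  · linarith

theorem integral_sq_div_sqrt_one_add_sq_asymp (a : ℝ) (ha : 0 < a) :
    ∃ C > (0:ℝ), ∃ ε₀ > (0:ℝ), ∀ ε : ℝ, 0 < ε → ε < ε₀ →
      |(∫ x in (0:ℝ)..(a/ε), x^2 / Real.sqrt (1 + x^2)) -
        (a^2/(2*ε^2) + (1/2)*Real.log ε + 1/4 - (1/2)*Real.log (2*a))| ≤ C * ε^2 := by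
  refine ⟨1/a^2, by positivity, a, ha, fun ε hε hεa => ?_⟩
  set T := a/ε with hTdef
  have hT1 : 1 < T := (one_lt_div hε).2 hεa
  have hT0 : 0 < T := lt_trans one_pos hT1
  have hInt : IntervalIntegrable (fun x => x^2 / Real.sqrt (1 + x^2))
      MeasureTheory.volume 0 T := by
    apply Continuous.intervalIntegrable
    exact (continuous_pow 2).div
      (Real.continuous_sqrt.comp (by continuity))
      (fun x => ne_of_gt (Real.sqrt_pos.2 (by positivity)))
  have hint : (∫ x in (0:ℝ)..T, x^2 / Real.sqrt (1 + x^2))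
      = T * Real.sqrt (1 + T^2) / 2 - Real.arsinh T / 2 := by
    rw [intervalIntegral.integral_eq_sub_of_hasDerivAt (fun x _ => hasDerivF x) hInt]
    simp [Real.arsinh_zero]
  have htarget : a^2/(2*ε^2) + (1/2)*Real.log ε + 1/4 - (1/2)*Real.log (2*a)
      = T^2/2 - Real.log (2*T)/2 + 1/4 := by
    have hlog : Real.log (2*T) = Real.log (2*a) - Real.log ε := by
      rw [hTdef, show 2*(a/ε) = (2*a)/ε by ring, Real.log_div (by positivity) (ne_of_gt hε)]
    have hT2 : T^2 = a^2/ε^2 := by rw [hTdef]; ring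
    rw [hlog, hT2]; ring
  rw [hint, htarget]
  have hbound := key T hT1.le
  have heq : 1 / T^2 = (1/a^2) * ε^2 := by
    rw [hTdef]; field_simp
  rw [heq] at hbound
  exact hbound
end

section
/- Fix a > 0. There exist C > 0 and ε₀ > 0 such that for all 0 < ε < ε₀, |(∫ x in (0)..(a/ε), x^4 / (1 + x^2)^(3/2)) - (a^2/(2*ε^2) + (3/2)*Real.log ε + 5/4 - (3/2)*Real.log (2*a))| ≤ C * ε^2. -/
open Real

lemma myF_deriv (x : ℝ) :
    HasDerivAt (fun t => t * Real.sqrt (1+t^2)/2 - (3/2) * Real.arsinh t + t / Real.sqrt (1+t^2))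
      (x^4 / Real.sqrt (1+x^2)^3) x := by
  have hsp : 0 < Real.sqrt (1+x^2) := Real.sqrt_pos.2 (by positivity)
  have hs2 : Real.sqrt (1+x^2)^2 = 1 + x^2 := Real.sq_sqrt (by positivity)
  have hsqrt : HasDerivAt (fun t => Real.sqrt (1+t^2)) (x/Real.sqrt (1+x^2)) x := by
    have h1 : HasDerivAt (fun t : ℝ => 1 + t^2) (2*x) x := by
      simpa using (hasDerivAt_pow 2 x).const_add 1
    have := (Real.hasDerivAt_sqrt (by positivity : (1:ℝ)+x^2 ≠ 0)).comp x h1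
    refine this.congr_deriv ?_
    field_simp
  have h1 : HasDerivAt (fun t => t * Real.sqrt (1+t^2)/2)
      ((1 * Real.sqrt (1+x^2) + x * (x/Real.sqrt (1+x^2)))/2) x :=
    ((hasDerivAt_id x).mul hsqrt).div_const 2
  have h2 : HasDerivAt (fun t => (3/2) * Real.arsinh t) ((3/2) * (Real.sqrt (1+x^2))⁻¹) x :=
    (Real.hasDerivAt_arsinh x).const_mul (3/2)
  have h3 : HasDerivAt (fun t => t / Real.sqrt (1+t^2))
      ((1 * Real.sqrt (1+x^2) - x * (x/Real.sqrt (1+x^2)))/(Real.sqrt (1+x^2))^2) x :=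
    (hasDerivAt_id x).div hsqrt hsp.ne'
  have := (h1.sub h2).add h3
  refine this.congr_deriv ?_
  set s := Real.sqrt (1+x^2)
  have hx2 : x^2 = s^2 - 1 := by linarith
  have hx4 : x^4 = (s^2-1)^2 := by rw [show x^4=(x^2)^2 from by ring, hx2]
  have hxx : x * (x/s) = (s^2-1)/s := by rw [mul_div_assoc', ← sq, hx2]
  rw [hx4, hxx]
  field_simp
  ring

lemma myF_integral (L : ℝ) :
    ∫ x in (0:ℝ)..L, x^4 / Real.sqrt (1+x^2)^3
      = L * Real.sqrt (1+L^2)/2 - (3/2) * Real.arsinh L + L / Real.sqrt (1+L^2) := by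
  have hcont : Continuous (fun x : ℝ => x^4 / Real.sqrt (1+x^2)^3) := by
    apply Continuous.div (by continuity) (by continuity)
    intro x
    positivity
  have := intervalIntegral.integral_eq_sub_of_hasDerivAt
    (f := fun t => t * Real.sqrt (1+t^2)/2 - (3/2) * Real.arsinh t + t / Real.sqrt (1+t^2))
    (fun x _ => myF_deriv x) (hcont.intervalIntegrable 0 L)
  rw [this]
  simp

lemma myF_bound (L : ℝ) (hL : 0 < L) :
    |(L * Real.sqrt (1+L^2)/2 - (3/2) * Real.arsinh L + L / Real.sqrt (1+L^2))
      - (L^2/2 + 5/4 - (3/2) * Real.log (2*L))| ≤ 1 / L^2 := by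
  set s := Real.sqrt (1+L^2) with hsdef
  have hsp : 0 < s := Real.sqrt_pos.2 (by positivity)
  have hs2 : s^2 = 1 + L^2 := Real.sq_sqrt (by positivity)
  have hsL : L ≤ s := by nlinarith
  -- piece A
  have hA : L * s / 2 - L^2/2 - 1/4 = -(1/(4*(s+L)^2)) := by
    have h : (s+L) ≠ 0 := by positivity
    field_simp
    nlinarith [hs2]
  have hAbound : |L * s / 2 - L^2/2 - 1/4| ≤ 1/(16*L^2) := by
    rw [hA, abs_neg, abs_of_nonneg (by positivity)]
    rw [div_le_div_iff₀ (by positivity) (by positivity)]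
    nlinarith
  -- piece B
  have hB : L / s - 1 = -(1/(s*(s+L))) := by
    have h : (s+L) ≠ 0 := by positivity
    field_simp
    nlinarith [hs2]
  have hBbound : |L / s - 1| ≤ 1/(2*L^2) := by
    rw [hB, abs_neg, abs_of_nonneg (by positivity)]
    rw [div_le_div_iff₀ (by positivity) (by positivity)]
    nlinarith
  -- piece D
  have hDeq : Real.arsinh L - Real.log (2*L) = Real.log ((L+s)/(2*L)) := by
    rw [Real.arsinh, Real.log_div (by positivity) (by positivity)]
  have hu1 : 1 ≤ (L+s)/(2*L) := by
    rw [le_div_iff₀ (by positivity)]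
    nlinarith
  have hsle : s ≤ L + 1/(2*L) := by
    have h1 : s^2 ≤ (L + 1/(2*L))^2 := by
      rw [hs2]
      have e : (L + 1/(2*L))^2 = L^2 + 1 + (1/(2*L))^2 := by field_simp; ring
      nlinarith [sq_nonneg (1/(2*L))]
    have hpos : (0:ℝ) < L + 1/(2*L) := by positivity
    nlinarith [h1, hsp, hpos]
  have hDbound : |Real.arsinh L - Real.log (2*L)| ≤ 1/(4*L^2) := by
    rw [hDeq, abs_of_nonneg (Real.log_nonneg hu1)]
    have h2 := Real.log_le_sub_one_of_pos (show (0:ℝ) < (L+s)/(2*L) by positivity)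
    have h3 : (L+s)/(2*L) - 1 ≤ 1/(4*L^2) := by
      rw [div_sub_one (by positivity : (2*L) ≠ 0), div_le_div_iff₀ (by positivity) (by positivity)]
      nlinarith
    linarith
  calc |(L * s/2 - (3/2) * Real.arsinh L + L / s) - (L^2/2 + 5/4 - (3/2) * Real.log (2*L))|
      = |(L * s / 2 - L^2/2 - 1/4) + (L/s - 1) + (-(3/2)) * (Real.arsinh L - Real.log (2*L))| := by
        ring_nf
    _ ≤ |L * s / 2 - L^2/2 - 1/4| + |L/s - 1| + |(-(3/2)) * (Real.arsinh L - Real.log (2*L))| := by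
        exact (abs_add_le _ _).trans (by gcongr; exact abs_add_le _ _)
    _ ≤ 1/(16*L^2) + 1/(2*L^2) + (3/2) * (1/(4*L^2)) := by
        refine add_le_add (add_le_add hAbound hBbound) ?_
        have habs : |(-(3/2) : ℝ)| = 3/2 := by norm_num
        rw [abs_mul, habs]
        exact mul_le_mul_of_nonneg_left hDbound (by norm_num)
    _ ≤ 1 / L^2 := by
        have he : 1/(16*L^2) + 1/(2*L^2) + (3/2)*(1/(4*L^2)) = (15/16)*(1/L^2) := by ring
        rw [he]
        have hp : (0:ℝ) ≤ 1/L^2 := by positivity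
        nlinarith

theorem integral_pow4_div_pow3_asymp (a : ℝ) (ha : 0 < a) :
    ∃ C > (0:ℝ), ∃ ε₀ > (0:ℝ), ∀ ε : ℝ, 0 < ε → ε < ε₀ →
      |(∫ x in (0:ℝ)..(a/ε), x^4 / Real.sqrt (1 + x^2)^3) -
        (a^2/(2*ε^2) + (3/2)*Real.log ε + 5/4 - (3/2)*Real.log (2*a))| ≤ C * ε^2 := by
  refine ⟨1/a^2, by positivity, 1, by norm_num, fun ε hε hε1 => ?_⟩
  set L := a/ε with hLdef
  have hL : 0 < L := by positivity
  have key := myF_bound L hL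
  rw [myF_integral]
  have h1 : a^2/(2*ε^2) + (3/2)*Real.log ε + 5/4 - (3/2)*Real.log (2*a)
      = L^2/2 + 5/4 - (3/2)*Real.log (2*L) := by
    have hlog : Real.log (2*L) = Real.log (2*a) - Real.log ε := by
      rw [hLdef, show 2*(a/ε) = (2*a)/ε by ring, Real.log_div (by positivity) hε.ne']
    rw [hlog, hLdef]
    field_simp
    ring
  rw [h1]
  have h2 : 1/L^2 = (1/a^2) * ε^2 := by rw [hLdef]; field_simp
  calc |(L * Real.sqrt (1+L^2)/2 - (3/2) * Real.arsinh L + L / Real.sqrt (1+L^2))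
        - (L^2/2 + 5/4 - (3/2) * Real.log (2*L))| ≤ 1/L^2 := key
    _ = (1/a^2) * ε^2 := h2
end

section
/- Fix a > 0. There exist C > 0 and ε₀ > 0 such that for all 0 < ε < ε₀, |(∫ x in (0)..(a/ε), x^6 / (1 + x^2)^(5/2)) - (a^2/(2*ε^2) + (5/2)*Real.log ε + 31/12 - (5/2)*Real.log (2*a))| ≤ C * ε^2. -/
set_option maxHeartbeats 800000

open Real

noncomputable def Fa (x : ℝ) : ℝ :=
  x * Real.sqrt (1 + x^2) / 2 - (5/2) * Real.arsinh x
    + 3 * x / Real.sqrt (1 + x^2) - x * (3 + 2*x^2) / (3 * Real.sqrt (1 + x^2)^3)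

lemma hasDerivAt_Fa (x : ℝ) : HasDerivAt Fa (x^6 / Real.sqrt (1 + x^2)^5) x := by
  have h1 : (0:ℝ) < 1 + x^2 := by positivity
  have hs0 : 0 < Real.sqrt (1 + x^2) := Real.sqrt_pos.mpr h1
  have hs2 : Real.sqrt (1 + x^2)^2 = 1 + x^2 := Real.sq_sqrt h1.le
  set s := Real.sqrt (1 + x^2) with hsdef
  have hinner : HasDerivAt (fun y : ℝ => 1 + y^2) (2*x) x := by
    simpa using (hasDerivAt_pow 2 x).const_add 1
  have hds : HasDerivAt (fun y => Real.sqrt (1 + y^2)) (2*x / (2*s)) x :=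
    hinner.sqrt (by positivity)
  have h1' : HasDerivAt (fun y => y * Real.sqrt (1 + y^2) / 2)
      ((1 * s + x * (2*x/(2*s))) / 2) x :=
    ((hasDerivAt_id x).mul hds).div_const 2
  have h2 : HasDerivAt (fun y => (5/2 : ℝ) * Real.arsinh y) ((5/2) * s⁻¹) x :=
    (Real.hasDerivAt_arsinh x).const_mul (5/2)
  have h3 : HasDerivAt (fun y => 3 * y / Real.sqrt (1 + y^2))
      ((3 * 1 * s - 3 * x * (2*x/(2*s))) / s^2) x :=
    ((hasDerivAt_id x).const_mul 3).div hds hs0.ne'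
  have hcube := ((hds.pow 3).const_mul (3:ℝ))
  have hq : HasDerivAt (fun y : ℝ => 3 + 2*y^2) (2*(2*x)) x := by
    simpa using ((hasDerivAt_pow 2 x).const_mul (2:ℝ)).const_add (3:ℝ)
  have hnum := (hasDerivAt_id x).mul hq
  have h4 := hnum.div hcube (mul_ne_zero (by norm_num) (pow_ne_zero _ hs0.ne'))
  have hF := ((h1'.sub h2).add h3).sub h4
  refine hF.congr_deriv ?_
  simp only [Pi.mul_apply, Pi.pow_apply, id_eq, ← hsdef]
  have hsne : s ≠ 0 := hs0.ne'
  field_simp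
  ring_nf
  simp only [show s^4 = (1+x^2)^2 by rw [← hs2]; ring, show s^6 = (1+x^2)^3 by rw [← hs2]; ring,
    show s^8 = (1+x^2)^4 by rw [← hs2]; ring, hs2]
  ring

lemma integral_eq_Fa (T : ℝ) :
    (∫ x in (0:ℝ)..T, x^6 / Real.sqrt (1 + x^2)^5) = Fa T := by
  have hcont : Continuous fun x : ℝ => x^6 / Real.sqrt (1 + x^2)^5 := by
    apply Continuous.div (by continuity) (by continuity)
    intro x
    have : (0:ℝ) < Real.sqrt (1 + x^2) := Real.sqrt_pos.mpr (by positivity)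
    positivity
  have := intervalIntegral.integral_eq_sub_of_hasDerivAt
    (fun x _ => hasDerivAt_Fa x) (hcont.intervalIntegrable 0 T)
  rw [this]
  have : Fa 0 = 0 := by simp [Fa]
  rw [this, sub_zero]

lemma Fa_bound (T : ℝ) (hT : 2 ≤ T) :
    |Fa T - (T^2/2 - (5/2)*Real.log (2*T) + 31/12)| ≤ 4 / T^2 := by
  have hT0 : (0:ℝ) < T := by linarith
  have h1 : (0:ℝ) < 1 + T^2 := by positivity
  have hs0 : 0 < Real.sqrt (1 + T^2) := Real.sqrt_pos.mpr h1
  have hs2 : Real.sqrt (1 + T^2)^2 = 1 + T^2 := Real.sq_sqrt h1.le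
  set s := Real.sqrt (1 + T^2) with hsdef
  clear_value s
  have hsT : T ≤ s := by nlinarith
  have hsub' : (s - T) * (2*T) ≤ 1 := by nlinarith
  -- arsinh bound
  have harsinh : Real.arsinh T = Real.log (T + s) := by rw [Real.arsinh, ← hsdef]
  have hlogd : Real.arsinh T - Real.log (2*T) = Real.log ((T+s)/(2*T)) := by
    rw [harsinh, Real.log_div (by positivity) (by positivity)]
  have hd0 : 0 ≤ Real.arsinh T - Real.log (2*T) := by
    rw [hlogd]
    apply Real.log_nonneg
    rw [le_div_iff₀ (by positivity)]; nlinarith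
  have hd1 : (Real.arsinh T - Real.log (2*T)) * (2*T) ≤ s - T := by
    have hlog := Real.log_le_sub_one_of_pos (show (0:ℝ) < (T+s)/(2*T) by positivity)
    have heq : (T+s)/(2*T) - 1 = (s-T)/(2*T) := by field_simp; ring
    rw [← le_div_iff₀ (by positivity : (0:ℝ) < 2*T)]
    rw [hlogd]
    calc Real.log ((T+s)/(2*T)) ≤ (T+s)/(2*T) - 1 := hlog
    _ = (s-T)/(2*T) := heq
  have A4 : |(5/2) * (Real.arsinh T - Real.log (2*T))| * T^2 ≤ 5/8 := by
    rw [abs_of_nonneg (by linarith)]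
    nlinarith [mul_le_mul_of_nonneg_right hd1 hT0.le]
  -- A1
  have A1 : |T*s/2 - T^2/2 - 1/4| * T^2 ≤ 1/16 := by
    have key : T*s/2 - T^2/2 - 1/4 = -((s-T)^2/4) := by nlinarith [hs2]
    rw [key, abs_neg, abs_of_nonneg (by positivity)]
    nlinarith [mul_nonneg (sub_nonneg.mpr hsT) hT0.le]
  -- A2
  have A2 : |3*T/s - 3| * T^2 ≤ 3/2 := by
    have key : 3*T/s - 3 = -(3*(s-T)/s) := by field_simp; ring
    rw [key, abs_neg, abs_of_nonneg (div_nonneg (by linarith) hs0.le),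
      div_mul_eq_mul_div, div_le_iff₀ hs0]
    nlinarith
  -- A3
  have hu2 : (s^3)^2 = (1+T^2)^3 := by rw [← hs2]; ring
  have hfact : (2*s^3 - 2*T^3 - 3*T) * (2*s^3 + 2*T^3 + 3*T) = 4 + 3*T^2 := by
    linear_combination 4*hu2
  have hnum0 : 0 ≤ 2*s^3 - 2*T^3 - 3*T := by
    nlinarith [hfact, show (0:ℝ) < 2*s^3 + 2*T^3 + 3*T by positivity]
  have hcube3 : (s*(2*T))^3 ≤ (2*T^2+1)^3 := by
    apply pow_le_pow_left₀ (by positivity)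
    nlinarith
  have hnumup : 2*s^3 - 2*T^3 - 3*T ≤ 3*T := by
    nlinarith [hcube3, mul_pos (mul_pos hT0 hT0) hT0]
  have A3 : |T*(3+2*T^2)/(3*s^3) - 2/3| * T^2 ≤ 1 := by
    have key : T*(3+2*T^2)/(3*s^3) - 2/3 = -((2*s^3 - 2*T^3 - 3*T)/(3*s^3)) := by
      field_simp; ring
    rw [key, abs_neg, abs_of_nonneg (div_nonneg hnum0 (by positivity)),
      div_mul_eq_mul_div, div_le_iff₀ (by positivity)]
    have hT3 : T^3 ≤ s^3 := pow_le_pow_left₀ hT0.le hsT 3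
    nlinarith [mul_le_mul_of_nonneg_right hnumup (sq_nonneg T), hT3]
  -- assemble
  have decomp : Fa T - (T^2/2 - (5/2)*Real.log (2*T) + 31/12) =
      (T*s/2 - T^2/2 - 1/4) + (3*T/s - 3) + (-(T*(3+2*T^2)/(3*s^3) - 2/3))
        + (-((5/2) * (Real.arsinh T - Real.log (2*T)))) := by
    unfold Fa; rw [← hsdef]; ring
  rw [decomp, le_div_iff₀ (by positivity : (0:ℝ) < T^2)]
  have habs := (abs_add_le ((T*s/2 - T^2/2 - 1/4) + (3*T/s - 3) + (-(T*(3+2*T^2)/(3*s^3) - 2/3)))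
      (-((5/2) * (Real.arsinh T - Real.log (2*T)))))
  rw [abs_neg] at habs
  have habs2 := abs_add_le ((T*s/2 - T^2/2 - 1/4) + (3*T/s - 3)) (-(T*(3+2*T^2)/(3*s^3) - 2/3))
  rw [abs_neg] at habs2
  have habs3 := abs_add_le (T*s/2 - T^2/2 - 1/4) (3*T/s - 3)
  have htot : |(T*s/2 - T^2/2 - 1/4) + (3*T/s - 3) + (-(T*(3+2*T^2)/(3*s^3) - 2/3))
        + (-((5/2) * (Real.arsinh T - Real.log (2*T))))| ≤
      |T*s/2 - T^2/2 - 1/4| + |3*T/s - 3| + |T*(3+2*T^2)/(3*s^3) - 2/3|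
        + |(5/2) * (Real.arsinh T - Real.log (2*T))| := by linarith
  have := mul_le_mul_of_nonneg_right htot (sq_nonneg T)
  linarith [A1, A2, A3, A4, this]

theorem integral_pow6_div_pow5_asymp (a : ℝ) (ha : 0 < a) :
    ∃ C > (0:ℝ), ∃ ε₀ > (0:ℝ), ∀ ε : ℝ, 0 < ε → ε < ε₀ →
      |(∫ x in (0:ℝ)..(a/ε), x^6 / Real.sqrt (1 + x^2)^5) -
        (a^2/(2*ε^2) + (5/2)*Real.log ε + 31/12 - (5/2)*Real.log (2*a))| ≤ C * ε^2 := by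
  refine ⟨4/a^2, by positivity, a/2, by positivity, fun ε hε hε' => ?_⟩
  have hT : 2 ≤ a/ε := by rw [le_div_iff₀ hε]; linarith
  rw [integral_eq_Fa (a/ε)]
  have heq : (a/ε)^2/2 - (5/2)*Real.log (2*(a/ε)) + 31/12 =
      a^2/(2*ε^2) + (5/2)*Real.log ε + 31/12 - (5/2)*Real.log (2*a) := by
    rw [show 2*(a/ε) = (2*a)/ε by ring, Real.log_div (by positivity) hε.ne']
    field_simp
    ring
  rw [← heq]
  calc |Fa (a/ε) - ((a/ε)^2/2 - (5/2)*Real.log (2*(a/ε)) + 31/12)| ≤ 4/(a/ε)^2 :=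
        Fa_bound (a/ε) hT
  _ = 4/a^2 * ε^2 := by
      rw [div_pow]
      field_simp
end

section
/- Let c : ℝ → ℝ be a C¹ function with c(0) = c₀ > 0, and let η > 0 be such that c(w) > 0 for all w ∈ [-η, η]. Then there exist C > 0 and ε₀ > 0 such that for all 0 < ε < ε₀, |(∫ w in (-η)..(η), 1 / Real.sqrt (ε^2 + w^2 * c(w))) + (2/Real.sqrt c₀) * Real.log ε| ≤ C. (Model form of the logarithmic blow-up of the period as the periodic orbit approaches the saddle.) -/
open Real intervalIntegral

/-- FTC computation: `∫ 1/√(ε²+k w²) = (2/√k) arsinh(√k η/ε)`. -/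
lemma ftc_aux (k ε η : ℝ) (hk : 0 < k) (hε : 0 < ε) :
    ∫ w in (-η)..η, 1 / Real.sqrt (ε^2 + w^2 * k)
      = (2 / Real.sqrt k) * Real.arsinh (Real.sqrt k * η / ε) := by
  have hsk : 0 < Real.sqrt k := Real.sqrt_pos.mpr hk
  have hderiv : ∀ x : ℝ, HasDerivAt (fun w => (Real.sqrt k)⁻¹ *
      Real.arsinh (Real.sqrt k * w / ε)) (1 / Real.sqrt (ε^2 + x^2 * k)) x := by
    intro x
    have h1 : HasDerivAt (fun w : ℝ => Real.sqrt k * w / ε) (Real.sqrt k / ε) x := by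
      simpa using ((hasDerivAt_id x).const_mul (Real.sqrt k)).div_const ε
    have h2 := (Real.hasDerivAt_arsinh (Real.sqrt k * x / ε)).comp x h1
    have h3 := h2.const_mul (Real.sqrt k)⁻¹
    refine h3.congr_deriv ?_
    have hx : (Real.sqrt k * x / ε)^2 = k * x^2 / ε^2 := by
      rw [div_pow, mul_pow, Real.sq_sqrt hk.le]
    have hpos : (0:ℝ) < ε^2 + x^2 * k := by positivity
    have hs : Real.sqrt (1 + (Real.sqrt k * x / ε)^2)
        = Real.sqrt (ε^2 + x^2 * k) / ε := by
      rw [hx, show 1 + k * x^2 / ε^2 = (ε^2 + x^2 * k) / ε^2 by field_simp,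
        Real.sqrt_div hpos.le, Real.sqrt_sq hε.le]
    rw [hs]
    have h4 : 0 < Real.sqrt (ε^2 + x^2 * k) := Real.sqrt_pos.mpr hpos
    field_simp [hsk.ne', hε.ne', h4.ne']
  have hcont : Continuous fun w : ℝ => 1 / Real.sqrt (ε^2 + w^2 * k) := by
    apply Continuous.div continuous_const
    · exact (continuous_const.add ((continuous_pow 2).mul continuous_const)).sqrt
    · intro w
      exact ne_of_gt (Real.sqrt_pos.mpr (by positivity))
  rw [intervalIntegral.integral_eq_sub_of_hasDerivAt (fun x _ => hderiv x)
    (hcont.intervalIntegrable _ _)]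
  have := Real.arsinh_neg (Real.sqrt k * η / ε)
  have hneg : Real.sqrt k * (-η) / ε = -(Real.sqrt k * η / ε) := by ring
  rw [hneg, Real.arsinh_neg]
  field_simp [hsk.ne']
  ring

set_option maxHeartbeats 1000000 in
theorem log_blowup_of_period (c : ℝ → ℝ) (hc : ContDiff ℝ 1 c) (c₀ : ℝ)
    (hc0 : c 0 = c₀) (hc0pos : 0 < c₀) (η : ℝ) (hη : 0 < η)
    (hpos : ∀ w ∈ Set.Icc (-η) η, 0 < c w) :
    ∃ C > (0:ℝ), ∃ ε₀ > (0:ℝ), ∀ ε : ℝ, 0 < ε → ε < ε₀ →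
      |(∫ w in (-η)..η, 1 / Real.sqrt (ε^2 + w^2 * c w)) +
        (2/Real.sqrt c₀) * Real.log ε| ≤ C := by
  have hle : -η ≤ η := by linarith
  have h0mem : (0:ℝ) ∈ Set.Icc (-η) η := by constructor <;> linarith
  -- positive lower bound m for c on the interval
  obtain ⟨x₀, hx₀, hmin⟩ := isCompact_Icc.exists_isMinOn (Set.nonempty_Icc.mpr hle)
    hc.continuous.continuousOn
  set m := c x₀ with hm
  have hmpos : 0 < m := hpos x₀ hx₀
  have hmle : ∀ w ∈ Set.Icc (-η) η, m ≤ c w := fun w hw => hmin hw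
  have hmc₀ : m ≤ c₀ := hc0 ▸ hmle 0 h0mem
  -- Lipschitz bound L for c on the interval
  obtain ⟨x₁, hx₁, hmax⟩ := isCompact_Icc.exists_isMaxOn (Set.nonempty_Icc.mpr hle)
    ((hc.continuous_deriv le_rfl).abs.continuousOn)
  set L := |deriv c x₁| with hL
  have hLnn : 0 ≤ L := abs_nonneg _
  have hlip : ∀ w ∈ Set.Icc (-η) η, |c w - c₀| ≤ L * |w| := by
    intro w hw
    have := Convex.norm_image_sub_le_of_norm_deriv_le
      (f := c) (s := Set.Icc (-η) η) (C := L)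
      (fun x _ => hc.differentiable one_ne_zero x)
      (fun x hx => hmax hx) (convex_Icc _ _) h0mem hw
    simpa [hc0, Real.norm_eq_abs] using this
  set sm := Real.sqrt m with hsm
  have hsmpos : 0 < sm := Real.sqrt_pos.mpr hmpos
  set K := L / (2 * m * sm) with hK
  have hKnn : 0 ≤ K := by positivity
  set a := Real.sqrt c₀ * η with ha
  have hsc₀ : 0 < Real.sqrt c₀ := Real.sqrt_pos.mpr hc0pos
  have hapos : 0 < a := mul_pos hsc₀ hη
  set B₀ := |Real.log a| + |Real.log (a + Real.sqrt (1 + a^2))| with hB₀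
  have hB₀nn : 0 ≤ B₀ := by positivity
  refine ⟨2*η*K + (2/Real.sqrt c₀)*B₀ + 1, by positivity, 1, one_pos, ?_⟩
  intro ε hε hε1
  -- pointwise bound on the difference of integrands
  have hptwise : ∀ w ∈ Set.Icc (-η) η,
      |1 / Real.sqrt (ε^2 + w^2 * c w) - 1 / Real.sqrt (ε^2 + w^2 * c₀)| ≤ K := by
    intro w hw
    rcases eq_or_ne w 0 with rfl | hw0
    · simpa using hKnn
    · have hwpos : 0 < |w| := abs_pos.mpr hw0
      set A := ε^2 + w^2 * c w with hA
      set B := ε^2 + w^2 * c₀ with hB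
      have hApos : 0 < A := by have := hpos w hw; positivity
      have hBpos : 0 < B := by positivity
      set sa := Real.sqrt A with hsa
      set sb := Real.sqrt B with hsb
      have hsapos : 0 < sa := Real.sqrt_pos.mpr hApos
      have hsbpos : 0 < sb := Real.sqrt_pos.mpr hBpos
      have hsa2 : sa^2 = A := Real.sq_sqrt hApos.le
      have hsb2 : sb^2 = B := Real.sq_sqrt hBpos.le
      have hwa : |w| * sm ≤ sa := by
        rw [hsa, show |w| * sm = Real.sqrt (w^2 * m) by
          rw [Real.sqrt_mul (sq_nonneg w), Real.sqrt_sq_eq_abs]]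
        apply Real.sqrt_le_sqrt
        rw [hA]
        nlinarith [hmle w hw, sq_nonneg ε, sq_nonneg w]
      have hwb : |w| * sm ≤ sb := by
        rw [hsb, show |w| * sm = Real.sqrt (w^2 * m) by
          rw [Real.sqrt_mul (sq_nonneg w), Real.sqrt_sq_eq_abs]]
        apply Real.sqrt_le_sqrt
        rw [hB]
        nlinarith [sq_nonneg ε, sq_nonneg w]
      have hprodpos : 0 < sa * sb * (sa + sb) :=
        mul_pos (mul_pos hsapos hsbpos) (add_pos hsapos hsbpos)
      have hdiff : 1 / sa - 1 / sb = (B - A) / (sa * sb * (sa + sb)) := by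
        rw [div_sub_div _ _ hsapos.ne' hsbpos.ne']
        rw [show B - A = (sb - sa) * (sb + sa) by linear_combination hsa2 - hsb2]
        rw [div_eq_div_iff (mul_pos hsapos hsbpos).ne' hprodpos.ne']
        ring
      rw [hdiff, abs_div, abs_of_pos hprodpos]
      have hnum : |B - A| ≤ L * |w|^3 := by
        have h1 : |B - A| = w^2 * |c₀ - c w| := by
          rw [show B - A = w^2 * (c₀ - c w) by rw [hA, hB]; ring, abs_mul,
            abs_of_nonneg (sq_nonneg w)]
        rw [h1, show L * |w|^3 = w^2 * (L * |w|) by rw [← sq_abs]; ring, abs_sub_comm]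
        exact mul_le_mul_of_nonneg_left (hlip w hw) (sq_nonneg w)
      have hden : 2 * |w|^3 * m * sm ≤ sa * sb * (sa + sb) := by
        have hsm2 : sm^2 = m := Real.sq_sqrt hmpos.le
        have hp : (|w| * sm) * (|w| * sm) ≤ sa * sb :=
          mul_le_mul hwa hwb (mul_nonneg hwpos.le hsmpos.le) hsapos.le
        have hq : (|w| * sm) + (|w| * sm) ≤ sa + sb := add_le_add hwa hwb
        calc 2 * |w|^3 * m * sm = ((|w| * sm) * (|w| * sm)) * ((|w| * sm) + (|w| * sm)) := by
              rw [← hsm2]; ring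
          _ ≤ (sa * sb) * (sa + sb) := mul_le_mul hp hq
              (add_nonneg (mul_nonneg hwpos.le hsmpos.le) (mul_nonneg hwpos.le hsmpos.le))
              (mul_nonneg hsapos.le hsbpos.le)
      have hdenpos : 0 < 2 * |w|^3 * m * sm :=
        mul_pos (mul_pos (mul_pos two_pos (pow_pos hwpos 3)) hmpos) hsmpos
      calc |B - A| / (sa * sb * (sa + sb)) ≤ (L * |w|^3) / (2 * |w|^3 * m * sm) :=
            div_le_div₀ (mul_nonneg hLnn (pow_nonneg (abs_nonneg w) 3)) hnum hdenpos hden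
        _ = K := by
            rw [hK]
            field_simp [hwpos.ne', hmpos.ne', hsmpos.ne']
  -- integrability
  have hfc : ContinuousOn (fun w => 1 / Real.sqrt (ε^2 + w^2 * c w)) (Set.Icc (-η) η) := by
    apply ContinuousOn.div continuousOn_const
    · exact (continuous_const.add ((continuous_pow 2).mul hc.continuous)).continuousOn.sqrt
    · intro w hw
      exact ne_of_gt (Real.sqrt_pos.mpr (by have := hpos w hw; positivity))
  have hfint : IntervalIntegrable (fun w => 1 / Real.sqrt (ε^2 + w^2 * c w))
      MeasureTheory.volume (-η) η := by
    apply ContinuousOn.intervalIntegrable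
    rwa [Set.uIcc_of_le hle]
  have hgcont : Continuous (fun w : ℝ => 1 / Real.sqrt (ε^2 + w^2 * c₀)) := by
    apply Continuous.div continuous_const
    · exact (continuous_const.add ((continuous_pow 2).mul continuous_const)).sqrt
    · intro w
      exact ne_of_gt (Real.sqrt_pos.mpr (by positivity))
  have hgint : IntervalIntegrable (fun w => 1 / Real.sqrt (ε^2 + w^2 * c₀))
      MeasureTheory.volume (-η) η := hgcont.intervalIntegrable _ _
  -- bound the difference of the integrals
  have hIJ : |(∫ w in (-η)..η, 1 / Real.sqrt (ε^2 + w^2 * c w)) -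
      (∫ w in (-η)..η, 1 / Real.sqrt (ε^2 + w^2 * c₀))| ≤ 2*η*K := by
    rw [← intervalIntegral.integral_sub hfint hgint]
    have := intervalIntegral.norm_integral_le_of_norm_le_const (C := K) (a := -η) (b := η)
      (f := fun w => 1 / Real.sqrt (ε^2 + w^2 * c w) - 1 / Real.sqrt (ε^2 + w^2 * c₀))
      (fun x hx => by
        rw [Set.uIoc_of_le hle] at hx
        exact hptwise x (Set.mem_Icc_of_Ioc hx))
    rw [Real.norm_eq_abs] at this
    calc _ ≤ K * |η - (-η)| := this
      _ = 2*η*K := by rw [abs_of_nonneg (by linarith)]; ring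
  -- value of the model integral
  have hJ : (∫ w in (-η)..η, 1 / Real.sqrt (ε^2 + w^2 * c₀))
      = (2 / Real.sqrt c₀) * Real.arsinh (a / ε) := by
    rw [ftc_aux c₀ ε η hc0pos hε, ha]
  -- bound the model term plus the log
  have hmodel : |(2 / Real.sqrt c₀) * Real.arsinh (a / ε) + (2/Real.sqrt c₀) * Real.log ε|
      ≤ (2/Real.sqrt c₀) * B₀ := by
    have hεa : 0 < a / ε := div_pos hapos hε
    have harsinh : Real.arsinh (a / ε) + Real.log ε
        = Real.log (a + Real.sqrt (ε^2 + a^2)) := by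
      rw [Real.arsinh]
      have hx : (a / ε)^2 = a^2 / ε^2 := by rw [div_pow]
      have hs : Real.sqrt (1 + (a/ε)^2) = Real.sqrt (ε^2 + a^2) / ε := by
        rw [hx, show 1 + a^2/ε^2 = (ε^2 + a^2)/ε^2 by field_simp,
          Real.sqrt_div (by positivity), Real.sqrt_sq hε.le]
      rw [hs, ← Real.log_mul (by positivity) hε.ne']
      congr 1
      field_simp
    have hsqnn : 0 ≤ Real.sqrt (ε^2 + a^2) := Real.sqrt_nonneg _
    have hmono1 : Real.log a ≤ Real.log (a + Real.sqrt (ε^2 + a^2)) :=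
      Real.log_le_log hapos (by linarith)
    have hmono2 : Real.log (a + Real.sqrt (ε^2 + a^2))
        ≤ Real.log (a + Real.sqrt (1 + a^2)) := by
      apply Real.log_le_log (by positivity)
      have : Real.sqrt (ε^2 + a^2) ≤ Real.sqrt (1 + a^2) :=
        Real.sqrt_le_sqrt (by nlinarith)
      linarith
    have habs : |Real.log (a + Real.sqrt (ε^2 + a^2))| ≤ B₀ := by
      rw [abs_le]
      constructor
      · have := neg_abs_le (Real.log a)
        have h2 : 0 ≤ |Real.log (a + Real.sqrt (1 + a^2))| := abs_nonneg _
        rw [hB₀]; linarith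
      · have := le_abs_self (Real.log (a + Real.sqrt (1 + a^2)))
        have h2 : 0 ≤ |Real.log a| := abs_nonneg _
        rw [hB₀]; linarith
    calc |(2 / Real.sqrt c₀) * Real.arsinh (a / ε) + (2/Real.sqrt c₀) * Real.log ε|
        = (2/Real.sqrt c₀) * |Real.arsinh (a / ε) + Real.log ε| := by
          rw [← mul_add, abs_mul, abs_of_pos (by positivity)]
      _ = (2/Real.sqrt c₀) * |Real.log (a + Real.sqrt (ε^2 + a^2))| := by rw [harsinh]
      _ ≤ (2/Real.sqrt c₀) * B₀ := by
          apply mul_le_mul_of_nonneg_left habs (by positivity)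
  calc |(∫ w in (-η)..η, 1 / Real.sqrt (ε^2 + w^2 * c w)) + (2/Real.sqrt c₀) * Real.log ε|
      = |((∫ w in (-η)..η, 1 / Real.sqrt (ε^2 + w^2 * c w)) -
          (∫ w in (-η)..η, 1 / Real.sqrt (ε^2 + w^2 * c₀))) +
        ((2 / Real.sqrt c₀) * Real.arsinh (a / ε) + (2/Real.sqrt c₀) * Real.log ε)| := by
        rw [hJ]; congr 1; ring
    _ ≤ |(∫ w in (-η)..η, 1 / Real.sqrt (ε^2 + w^2 * c w)) -
          (∫ w in (-η)..η, 1 / Real.sqrt (ε^2 + w^2 * c₀))| +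
        |(2 / Real.sqrt c₀) * Real.arsinh (a / ε) + (2/Real.sqrt c₀) * Real.log ε| :=
        abs_add_le _ _
    _ ≤ 2*η*K + (2/Real.sqrt c₀)*B₀ := add_le_add hIJ hmodel
    _ ≤ 2*η*K + (2/Real.sqrt c₀)*B₀ + 1 := by linarith
end

section
/- Let n = k + m, let R⁻ : Matrix (Fin n) (Fin k) ℝ and R⁺ : Matrix (Fin n) (Fin m) ℝ be such that the block matrix M = (R⁻ | R⁺) is invertible, with inverse written in row blocks L⁻ : Matrix (Fin k) (Fin n) ℝ and L⁺ : Matrix (Fin m) (Fin n) ℝ (so L⁻ * R⁻ = 1, L⁺ * R⁺ = 1, L⁻ * R⁺ = 0, L⁺ * R⁻ = 0). Then for any matrix P : Matrix (Fin n) (Fin n) ℝ, det (R⁻ | P * R⁺) = det M * det (L⁺ * P * R⁺). -/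
open Matrix

theorem det_fromColumns_factorization (k m : ℕ)
    (Rm : Matrix (Fin k ⊕ Fin m) (Fin k) ℝ) (Rp : Matrix (Fin k ⊕ Fin m) (Fin m) ℝ)
    (Lm : Matrix (Fin k) (Fin k ⊕ Fin m) ℝ) (Lp : Matrix (Fin m) (Fin k ⊕ Fin m) ℝ)
    (hM : IsUnit (Matrix.fromCols Rm Rp))
    (h1 : Lm * Rm = 1) (h2 : Lp * Rp = 1) (h3 : Lm * Rp = 0) (h4 : Lp * Rm = 0)
    (P : Matrix (Fin k ⊕ Fin m) (Fin k ⊕ Fin m) ℝ) :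
    (Matrix.fromCols Rm (P * Rp)).det =
      (Matrix.fromCols Rm Rp).det * (Lp * P * Rp).det := by
  have hinv : fromRows Lm Lp * fromCols Rm Rp = 1 := by
    rw [fromRows_mul_fromCols, h1, h2, h3, h4, fromBlocks_one]
  have hMdet : (fromCols Rm Rp).det * (fromRows Lm Lp).det = 1 := by
    rw [mul_comm, ← det_mul, hinv, det_one]
  have key : fromRows Lm Lp * fromCols Rm (P * Rp) =
      fromBlocks 1 (Lm * (P * Rp)) 0 (Lp * (P * Rp)) := by
    rw [fromRows_mul_fromCols, h1, ← Matrix.mul_assoc, ← Matrix.mul_assoc, h4]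
  calc (fromCols Rm (P * Rp)).det
      = ((fromCols Rm Rp).det * (fromRows Lm Lp).det) * (fromCols Rm (P * Rp)).det := by
        rw [hMdet, one_mul]
    _ = (fromCols Rm Rp).det * (fromRows Lm Lp * fromCols Rm (P * Rp)).det := by
        rw [det_mul, mul_assoc]
    _ = (fromCols Rm Rp).det * (Lp * P * Rp).det := by
        rw [key, det_fromBlocks_zero₂₁, det_one, one_mul, Matrix.mul_assoc]
end

section
/- Let b ≠ 0, B = !![0, b; b, 0], and let g : ℝ → ℝ be differentiable. Define q(v) = (1/2) * ((v, g v) ⬝ᵥ (B⁻¹ *ᵥ (v, g v))), and let 𝕊 be the 4×4 matrix of the previous context. Then for every v ∈ ℝ, with V = (1, v, g v, q v) and W = (0, 1, deriv g v, deriv q v), one has V ⬝ᵥ (𝕊 *ᵥ W) = 0. -/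
open Matrix

theorem orthogonality_V_S_W (b : ℝ) (hb : b ≠ 0) (g : ℝ → ℝ)
    (hg : Differentiable ℝ g) (v : ℝ) :
    let B : Matrix (Fin 2) (Fin 2) ℝ := !![0, b; b, 0]
    let q : ℝ → ℝ := fun v => (1/2) * (![v, g v] ⬝ᵥ (B⁻¹ *ᵥ ![v, g v]))
    let 𝕊 : Matrix (Fin 4) (Fin 4) ℝ :=
      !![0, 0, 0, -1;
         0, 0, 1/b, 0;
         0, 1/b, 0, 0;
         -1, 0, 0, 0]
    let V : Fin 4 → ℝ := ![1, v, g v, q v]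
    let W : Fin 4 → ℝ := ![0, 1, deriv g v, deriv q v]
    V ⬝ᵥ (𝕊 *ᵥ W) = 0 := by
  intro B q 𝕊 V W
  have hBinv : B⁻¹ = !![0, 1/b; 1/b, 0] := by
    apply Matrix.inv_eq_right_inv
    ext i j
    fin_cases i <;> fin_cases j <;>
      simp [B, Matrix.mul_apply, Fin.sum_univ_two, hb]
  have hq : q = fun v => v * g v / b := by
    funext x
    simp [q, hBinv, Matrix.mulVec, dotProduct, Fin.sum_univ_two]
    ring
  have hdq : deriv q v = (g v + v * deriv g v) / b := by
    rw [hq]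
    have h1 : HasDerivAt (fun x => x * g x / b) ((1 * g v + v * deriv g v) / b) v := by
      exact ((hasDerivAt_id v).mul (hg v).hasDerivAt).div_const b
    rw [h1.deriv]; ring
  have hd2 : deriv (fun x => x * g x) v = 1 * g v + v * deriv g v :=
    ((hasDerivAt_id v).mul (hg v).hasDerivAt).deriv
  simp [V, W, 𝕊, hq, hdq, hd2, Matrix.mulVec, dotProduct, Fin.sum_univ_four,
    Matrix.vecHead, Matrix.vecTail, Function.comp]
  field_simp
  ring
end
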